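/- (Uniqueness in the λ-H representation, pointwise-anchored form.) Let U ⊆ ℝ² be a nonempty connected open set and let φ, ψ : ℝ² → ℝ³ be two conformal immersions on U with the same conformal factor λ. Let n_φ := (φ_u × φ_v)/‖φ_u × φ_v‖ and n_ψ := (ψ_u × ψ_v)/‖ψ_u × ψ_v‖ be their unit normals, and suppose that on all of U the mean curvatures agree, ⟨Δφ, n_φ⟩/(2λ²) = ⟨Δψ, n_ψ⟩/(2λ²), and the quantities μ agree, (∂_z φ_z, n_φ) = (∂_z ψ_z, n_ψ). If in addition there is a point p ∈ U with φ(p) = ψ(p), φ_u(p) = ψ_u(p) and φ_v(p) = ψ_v(p), then φ = ψ on U. -/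

import Mathlib

open Complex

noncomputable section

/-- Euclidean 3-space. -/
abbrev E3 : Type := EuclideanSpace ℝ (Fin 3)

/-- Partial derivative in the first (u) coordinate direction. -/
def pu {F : Type} [NormedAddCommGroup F] [NormedSpace ℝ F]
    (f : ℝ × ℝ → F) (p : ℝ × ℝ) : F := fderiv ℝ f p (1, 0)

/-- Partial derivative in the second (v) coordinate direction. -/
def pv {F : Type} [NormedAddCommGroup F] [NormedSpace ℝ F]
    (f : ℝ × ℝ → F) (p : ℝ × ℝ) : F := fderiv ℝ f p (0, 1)

/-- Cross product on ℝ³. -/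
def cross (a b : E3) : E3 :=
  (WithLp.equiv 2 (Fin 3 → ℝ)).symm
    ![a 1 * b 2 - a 2 * b 1, a 2 * b 0 - a 0 * b 2, a 0 * b 1 - a 1 * b 0]

/-- The Euclidean inner product on ℝ³. -/
def ip (a b : E3) : ℝ := @inner ℝ _ _ a b

/-- `φ` is a smooth conformal immersion on the open set `U ⊆ ℝ²` with
(smooth, positive) conformal factor `lam`:  ⟨φ_u,φ_u⟩ = λ², ⟨φ_v,φ_v⟩ = λ²,
⟨φ_u,φ_v⟩ = 0 at every point of `U`. -/
def IsConfImm (U : Set (ℝ × ℝ)) (φ : ℝ × ℝ → E3) (lam : ℝ × ℝ → ℝ) : Prop :=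
  IsOpen U ∧ ContDiffOn ℝ (⊤ : ℕ∞) φ U ∧ ContDiffOn ℝ (⊤ : ℕ∞) lam U ∧
    ∀ p ∈ U, 0 < lam p ∧
      ip (pu φ p) (pu φ p) = (lam p) ^ 2 ∧
      ip (pv φ p) (pv φ p) = (lam p) ^ 2 ∧
      ip (pu φ p) (pv φ p) = 0

/-- Complexification ℝ³ ↪ ℂ³. -/
def toC (x : E3) : Fin 3 → ℂ := fun j => (x j : ℂ)

/-- Complex-bilinear dot product on ℂ³:  (a,b) = Σⱼ aⱼ bⱼ. -/
def cdot (a b : Fin 3 → ℂ) : ℂ := ∑ j, a j * b j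

/-- ∂_z = ½(∂_u − i ∂_v) for maps into complex normed spaces. -/
def dz {F : Type} [NormedAddCommGroup F] [NormedSpace ℂ F]
    (f : ℝ × ℝ → F) (p : ℝ × ℝ) : F :=
  (2 : ℂ)⁻¹ • (pu f p - Complex.I • pv f p)

/-- ∂_z̄ = ½(∂_u + i ∂_v) for maps into complex normed spaces. -/
def dzbar {F : Type} [NormedAddCommGroup F] [NormedSpace ℂ F]
    (f : ℝ × ℝ → F) (p : ℝ × ℝ) : F :=
  (2 : ℂ)⁻¹ • (pu f p + Complex.I • pv f p)

/-- `f_z := ½(f_u − i f_v) ∈ ℂ³` for a real-vector-valued map `f` (in particular `φ_z`). -/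
def phiz (f : ℝ × ℝ → E3) (p : ℝ × ℝ) : Fin 3 → ℂ :=
  (2 : ℂ)⁻¹ • (toC (pu f p) - Complex.I • toC (pv f p))

/-- `f_z̄ := ½(f_u + i f_v) ∈ ℂ³` for a real-vector-valued map `f` (in particular `φ_z̄`). -/
def phizbar (f : ℝ × ℝ → E3) (p : ℝ × ℝ) : Fin 3 → ℂ :=
  (2 : ℂ)⁻¹ • (toC (pu f p) + Complex.I • toC (pv f p))

/-- The unit normal n = (φ_u × φ_v)/‖φ_u × φ_v‖. -/
def nvec (φ : ℝ × ℝ → E3) (p : ℝ × ℝ) : E3 :=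
  ‖cross (pu φ p) (pv φ p)‖⁻¹ • cross (pu φ p) (pv φ p)

/-- Componentwise Laplacian Δ = ∂_uu + ∂_vv. -/
def lap {F : Type} [NormedAddCommGroup F] [NormedSpace ℝ F]
    (f : ℝ × ℝ → F) (p : ℝ × ℝ) : F := pu (pu f) p + pv (pv f) p

/-- Mean curvature H = ⟨Δφ, n⟩/(2λ²). -/
def mcurv (φ : ℝ × ℝ → E3) (lam : ℝ × ℝ → ℝ) (p : ℝ × ℝ) : ℝ :=
  ip (lap φ p) (nvec φ p) / (2 * (lam p) ^ 2)

/-- μ := (∂_z φ_z, n). -/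
def muQ (φ : ℝ × ℝ → E3) (p : ℝ × ℝ) : ℂ :=
  cdot (dz (phiz φ) p) (toC (nvec φ p))

/-!
For a conformal immersion the frame `F_φ := (φ, φ_u, φ_v)` satisfies the Gauss–Weingarten
system: each second derivative of `φ` is a combination of `φ_u`, `φ_v` and `φ_u × φ_v` whose
coefficients are `λ_u / λ`, `λ_v / λ` and the second fundamental form divided by `λ²`.
The second fundamental form is recovered from `H` (its trace) and `μ` (its trace-free part),
so `F_φ` and `F_ψ` solve the same first-order system. The system is only quadratic in the frame,
hence `‖D(F_φ - F_ψ)‖ ≤ B ‖F_φ - F_ψ‖` with `B` continuous; Grönwall's inequality along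
segments makes the zero set of `F_φ - F_ψ` open in `U`, and connectedness finishes the argument.
-/

open Set Metric Filter Topology

section FirstOrderUniqueness

variable {E F : Type*} [NormedAddCommGroup E] [NormedSpace ℝ E]
  [NormedAddCommGroup F] [NormedSpace ℝ F] {h : E → F}

theorem Convex.eq_zero_of_norm_fderiv_le_mul_norm {s : Set E} (hs : Convex ℝ s)
    (hd : ∀ x ∈ s, DifferentiableAt ℝ h x) {C : ℝ} (hC : ∀ x ∈ s, ‖fderiv ℝ h x‖ ≤ C * ‖h x‖)
    {a b : E} (ha : a ∈ s) (hb : b ∈ s) (h0 : h a = 0) : h b = 0 := by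
  set γ : ℝ → E := fun t => a + t • (b - a)
  have hγs : ∀ t ∈ Icc (0 : ℝ) 1, γ t ∈ s := fun t ht => hs.add_smul_sub_mem ha hb ht
  have hderiv : ∀ t ∈ Icc (0 : ℝ) 1,
      HasDerivAt (h ∘ γ) (fderiv ℝ h (γ t) (b - a)) t := by
    intro t ht
    have hγ : HasDerivAt γ (b - a) t := by
      have := ((hasDerivAt_id t).smul_const (b - a)).const_add a
      rwa [one_smul] at this
    exact (hd _ (hγs t ht)).hasFDerivAt.comp_hasDerivAt t hγ
  have hbound : ∀ t ∈ Ico (0 : ℝ) 1,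
      ‖fderiv ℝ h (γ t) (b - a)‖ ≤ (C * ‖b - a‖) * ‖(h ∘ γ) t‖ := fun t ht =>
    calc ‖fderiv ℝ h (γ t) (b - a)‖ ≤ ‖fderiv ℝ h (γ t)‖ * ‖b - a‖ :=
          ContinuousLinearMap.le_opNorm _ _
      _ ≤ C * ‖h (γ t)‖ * ‖b - a‖ := by gcongr; exact hC _ (hγs t (Ico_subset_Icc_self ht))
      _ = (C * ‖b - a‖) * ‖(h ∘ γ) t‖ := by simp only [Function.comp_apply]; ring
  have := eq_zero_of_abs_deriv_le_mul_abs_self_of_eq_zero_right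
    (fun t ht => (hderiv t ht).continuousAt.continuousWithinAt)
    (fun t ht => (hderiv t (Ico_subset_Icc_self ht)).hasDerivWithinAt)
    (by simpa [γ] using h0) hbound 1 (right_mem_Icc.2 zero_le_one)
  simpa [γ] using this

theorem IsPreconnected.eq_zero_of_norm_fderiv_le_mul_norm {U : Set E} (hU : IsPreconnected U)
    (hUo : IsOpen U) (hd : ∀ x ∈ U, DifferentiableAt ℝ h x) {B : E → ℝ}
    (hB : ContinuousOn B U) (hbound : ∀ x ∈ U, ‖fderiv ℝ h x‖ ≤ B x * ‖h x‖)
    {p : E} (hp : p ∈ U) (h0 : h p = 0) : ∀ q ∈ U, h q = 0 := by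
  have hlocal : ∀ x ∈ U, ∀ᶠ y in 𝓝[U] x, (h x = 0 ↔ h y = 0) := by
    intro x hx
    have hnear : ∀ᶠ y in 𝓝 x, y ∈ U ∧ B y < B x + 1 :=
      (hUo.eventually_mem hx).and ((hB.continuousAt (hUo.mem_nhds hx)).eventually_lt
        continuousAt_const (lt_add_one _))
    obtain ⟨ε, hε, hball⟩ := Metric.eventually_nhds_iff_ball.1 hnear
    have hC : ∀ y ∈ ball x ε, ‖fderiv ℝ h y‖ ≤ (B x + 1) * ‖h y‖ := fun y hy =>
      (hbound y (hball y hy).1).trans (by gcongr; exact (hball y hy).2.le)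
    have hdball : ∀ y ∈ ball x ε, DifferentiableAt ℝ h y := fun y hy => hd y (hball y hy).1
    refine nhdsWithin_le_nhds (Metric.eventually_nhds_iff_ball.2 ⟨ε, hε, fun y hy => ?_⟩)
    exact ⟨(convex_ball x ε).eq_zero_of_norm_fderiv_le_mul_norm hdball hC (mem_ball_self hε) hy,
      (convex_ball x ε).eq_zero_of_norm_fderiv_le_mul_norm hdball hC hy (mem_ball_self hε)⟩
  intro q hq
  exact (hU.induction₂ (fun x y => h x = 0 ↔ h y = 0) hlocal
    (fun _ _ _ _ _ _ => Iff.trans) (fun _ _ _ _ => Iff.symm) hp hq).1 h0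

end FirstOrderUniqueness

section CrossProduct

lemma ip_eq_sum (a b : E3) : ip a b = a 0 * b 0 + a 1 * b 1 + a 2 * b 2 := by
  simp only [ip, PiLp.inner_apply, RCLike.inner_apply, Real.ringHom_apply, Fin.sum_univ_three]
  ring

lemma ip_smul_right (a b : E3) (r : ℝ) : ip a (r • b) = r * ip a b := real_inner_smul_right a b r

lemma ip_comm (a b : E3) : ip a b = ip b a := real_inner_comm b a

lemma ip_self (a : E3) : ip a a = ‖a‖ ^ 2 := real_inner_self_eq_norm_sq a

lemma ip_cross_self (a b : E3) :
    ip (cross a b) (cross a b) = ip a a * ip b b - ip a b ^ 2 := by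
  simp only [ip_eq_sum, cross, WithLp.equiv_symm_apply, Fin.isValue, Matrix.cons_val]
  ring

lemma norm_cross_le (a b : E3) : ‖cross a b‖ ≤ ‖a‖ * ‖b‖ := by
  have h : ‖cross a b‖ ^ 2 ≤ (‖a‖ * ‖b‖) ^ 2 := by
    rw [← ip_self, ip_cross_self, mul_pow, ← ip_self, ← ip_self]
    nlinarith [sq_nonneg (ip a b)]
  exact (pow_le_pow_iff_left₀ (norm_nonneg _) (by positivity) two_ne_zero).1 h

lemma cross_sub_cross (a b a' b' : E3) :
    cross a b - cross a' b' = cross (a - a') b + cross a' (b - b') := by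
  ext j
  fin_cases j <;>
    simp only [cross, WithLp.equiv_symm_apply, PiLp.add_apply, PiLp.sub_apply, Fin.zero_eta,
      Fin.mk_one, Fin.reduceFinMk, Fin.isValue, Matrix.cons_val] <;> ring

lemma gram_smul_eq (a b v : E3) :
    (ip a a * ip b b - ip a b ^ 2) • v =
      (ip v a * ip b b - ip v b * ip a b) • a + (ip v b * ip a a - ip v a * ip a b) • b
        + ip v (cross a b) • cross a b := by
  ext j
  fin_cases j <;>
    simp only [ip_eq_sum, cross, WithLp.equiv_symm_apply, PiLp.add_apply, PiLp.smul_apply,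
      smul_eq_mul, Fin.zero_eta, Fin.mk_one, Fin.reduceFinMk, Fin.isValue, Matrix.cons_val] <;> ring

lemma eq_add_add_cross_of_orthogonal {a b : E3} {r : ℝ} (hr : r ≠ 0) (ha : ip a a = r)
    (hb : ip b b = r) (hab : ip a b = 0) (v : E3) :
    v = (ip v a / r) • a + (ip v b / r) • b + (ip v (cross a b) / r ^ 2) • cross a b := by
  have h := gram_smul_eq a b v
  rw [ha, hb, hab] at h
  apply smul_right_injective E3 (pow_ne_zero 2 hr)
  simp only [← sq, zero_pow two_ne_zero, sub_zero, mul_zero] at h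
  change r ^ 2 • v = r ^ 2 • _
  rw [h]
  match_scalars <;> field_simp

lemma norm_smul_add_smul_add_cross_sub_le {α β γ m : ℝ} {a b a' b' : E3}
    (ha : ‖a - a'‖ ≤ m) (hb : ‖b - b'‖ ≤ m) :
    ‖(α • a + β • b + γ • cross a b) - (α • a' + β • b' + γ • cross a' b')‖
      ≤ (|α| + |β| + |γ| * (‖b‖ + ‖a'‖)) * m := by
  have hm : 0 ≤ m := (norm_nonneg _).trans ha
  have hcross : ‖cross a b - cross a' b'‖ ≤ (‖b‖ + ‖a'‖) * m := by
    rw [cross_sub_cross]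
    calc ‖cross (a - a') b + cross a' (b - b')‖
        ≤ ‖a - a'‖ * ‖b‖ + ‖a'‖ * ‖b - b'‖ :=
          (norm_add_le _ _).trans (add_le_add (norm_cross_le _ _) (norm_cross_le _ _))
      _ ≤ m * ‖b‖ + ‖a'‖ * m := by gcongr
      _ = (‖b‖ + ‖a'‖) * m := by ring
  calc ‖(α • a + β • b + γ • cross a b) - (α • a' + β • b' + γ • cross a' b')‖
      = ‖α • (a - a') + β • (b - b') + γ • (cross a b - cross a' b')‖ := by
        congr 1; simp only [smul_sub]; abel
    _ ≤ |α| * ‖a - a'‖ + |β| * ‖b - b'‖ + |γ| * ‖cross a b - cross a' b'‖ := by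
        refine (norm_add₃_le).trans ?_
        simp only [norm_smul, Real.norm_eq_abs, le_refl]
    _ ≤ |α| * m + |β| * m + |γ| * ((‖b‖ + ‖a'‖) * m) := by gcongr
    _ = (|α| + |β| + |γ| * (‖b‖ + ‖a'‖)) * m := by ring

end CrossProduct

section PartialDerivatives

variable {F : Type} [NormedAddCommGroup F] [NormedSpace ℝ F] {U : Set (ℝ × ℝ)}
  {f : ℝ × ℝ → F} {q : ℝ × ℝ}

lemma norm_fderiv_le_norm_pu_add_norm_pv :
    ‖fderiv ℝ f q‖ ≤ ‖pu f q‖ + ‖pv f q‖ := by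
  refine ContinuousLinearMap.opNorm_le_bound _ (by positivity) fun w => ?_
  have hw : w = w.1 • ((1 : ℝ), (0 : ℝ)) + w.2 • ((0 : ℝ), (1 : ℝ)) := by ext <;> simp
  calc ‖fderiv ℝ f q w‖ = ‖w.1 • pu f q + w.2 • pv f q‖ := by
        rw [hw, map_add, map_smul, map_smul]; simp [pu, pv]
    _ ≤ ‖w‖ * ‖pu f q‖ + ‖w‖ * ‖pv f q‖ := by
        refine (norm_add_le _ _).trans (add_le_add ?_ ?_) <;> rw [norm_smul] <;> gcongr
        exacts [norm_fst_le w, norm_snd_le w]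
    _ = (‖pu f q‖ + ‖pv f q‖) * ‖w‖ := by ring

lemma ContDiffOn.fderiv_apply_of_isOpen (hf : ContDiffOn ℝ (⊤ : ℕ∞) f U) (hU : IsOpen U)
    (w : ℝ × ℝ) : ContDiffOn ℝ (⊤ : ℕ∞) (fun x => fderiv ℝ f x w) U :=
  (ContinuousLinearMap.apply ℝ F w).contDiff.comp_contDiffOn
    (hf.fderiv_of_isOpen hU (m := (⊤ : ℕ∞)) (by simp))

lemma ContDiffOn.differentiableAt_of_isOpen (hf : ContDiffOn ℝ (⊤ : ℕ∞) f U) (hU : IsOpen U)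
    (hq : q ∈ U) : DifferentiableAt ℝ f q :=
  (hf.differentiableOn (by simp)).differentiableAt (hU.mem_nhds hq)

lemma pu_pv_comm (hf : ContDiffOn ℝ (⊤ : ℕ∞) f U) (hU : IsOpen U) (hq : q ∈ U) :
    pu (pv f) q = pv (pu f) q := by
  have hdf : DifferentiableAt ℝ (fderiv ℝ f) q :=
    (hf.fderiv_of_isOpen hU (m := (⊤ : ℕ∞)) (by simp)).differentiableAt_of_isOpen hU hq
  have hsymm : IsSymmSndFDerivAt ℝ f q :=
    (hf.contDiffAt (hU.mem_nhds hq)).isSymmSndFDerivAt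
      (by rw [minSmoothness_of_isRCLikeNormedField]; exact WithTop.coe_le_coe.2 le_top)
  have happly : ∀ v w : ℝ × ℝ,
      fderiv ℝ (fun x => fderiv ℝ f x v) q w = fderiv ℝ (fderiv ℝ f) q w v := fun v w => by
    rw [fderiv_clm_apply hdf (differentiableAt_const v)]
    simp
  simp only [pu, pv]
  exact (happly _ _).trans ((hsymm _ _).trans (happly _ _).symm)

end PartialDerivatives

lemma fderiv_ip_eq_of_eqOn {U : Set (ℝ × ℝ)} {f g : ℝ × ℝ → E3} {c : ℝ × ℝ → ℝ}
    {q : ℝ × ℝ} (hU : IsOpen U) (hq : q ∈ U) (hf : DifferentiableAt ℝ f q)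
    (hg : DifferentiableAt ℝ g q) (h : ∀ x ∈ U, ip (f x) (g x) = c x) (w : ℝ × ℝ) :
    ip (f q) (fderiv ℝ g q w) + ip (fderiv ℝ f q w) (g q) = fderiv ℝ c q w := by
  rw [← (eventuallyEq_of_mem (hU.mem_nhds hq) h).fderiv_eq]
  exact (fderiv_inner_apply ℝ hf hg w).symm

def secondFormUU (φ : ℝ × ℝ → E3) (q : ℝ × ℝ) : ℝ := ip (pu (pu φ) q) (nvec φ q)

def secondFormUV (φ : ℝ × ℝ → E3) (q : ℝ × ℝ) : ℝ := ip (pu (pv φ) q) (nvec φ q)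

def secondFormVV (φ : ℝ × ℝ → E3) (q : ℝ × ℝ) : ℝ := ip (pv (pv φ) q) (nvec φ q)

def complexifyCLM : E3 →L[ℝ] (Fin 3 → ℂ) :=
  ContinuousLinearMap.pi fun j => ofRealCLM.comp (EuclideanSpace.proj j)

lemma fderiv_phiz {f : ℝ × ℝ → E3} {q : ℝ × ℝ} (hu : DifferentiableAt ℝ (pu f) q)
    (hv : DifferentiableAt ℝ (pv f) q) (w : ℝ × ℝ) :
    fderiv ℝ (phiz f) q w
      = (2 : ℂ)⁻¹ • (toC (fderiv ℝ (pu f) q w) - I • toC (fderiv ℝ (pv f) q w)) := by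
  have h : HasFDerivAt (phiz f) ((2 : ℂ)⁻¹ • (complexifyCLM.comp (fderiv ℝ (pu f) q)
      - I • complexifyCLM.comp (fderiv ℝ (pv f) q))) q := by
    change HasFDerivAt ((2 : ℂ)⁻¹ • (complexifyCLM ∘ pu f - I • complexifyCLM ∘ pv f)) _ q
    exact ((complexifyCLM.hasFDerivAt.comp q hu.hasFDerivAt).sub
      ((complexifyCLM.hasFDerivAt.comp q hv.hasFDerivAt).const_smul I)).const_smul (2 : ℂ)⁻¹
  rw [h.fderiv]
  rfl

lemma cdot_toC_eq (x₁ x₂ x₃ x₄ n : E3) :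
    cdot ((2 : ℂ)⁻¹ • ((2 : ℂ)⁻¹ • (toC x₁ - I • toC x₂)
        - I • ((2 : ℂ)⁻¹ • (toC x₃ - I • toC x₄)))) (toC n)
      = (((ip x₁ n - ip x₄ n) / 4 : ℝ) : ℂ) - (((ip x₂ n + ip x₃ n) / 4 : ℝ) : ℂ) * I := by
  simp only [cdot, toC, ip_eq_sum, Fin.sum_univ_three, Pi.smul_apply, Pi.sub_apply, smul_eq_mul]
  push_cast
  ring_nf
  simp only [I_sq]
  ring

lemma mcurv_eq_add (φ : ℝ × ℝ → E3) (lam : ℝ × ℝ → ℝ) (q : ℝ × ℝ) :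
    mcurv φ lam q = (secondFormUU φ q + secondFormVV φ q) / (2 * lam q ^ 2) := by
  rw [mcurv, lap, secondFormUU, secondFormVV, ip, inner_add_left]
  rfl

def frame (φ : ℝ × ℝ → E3) (q : ℝ × ℝ) : E3 × E3 × E3 := (φ q, pu φ q, pv φ q)

-- Dominates the coefficients of the Gauss–Weingarten system; the factor `‖φ_v‖ + ‖ψ_u‖`
-- comes from `cross_sub_cross`.
def frameBound (φ ψ : ℝ × ℝ → E3) (lam : ℝ × ℝ → ℝ) (q : ℝ × ℝ) : ℝ :=
  1 + |pu lam q / lam q| + |pv lam q / lam q|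
    + (‖pu (pu φ) q‖ + ‖pu (pv φ) q‖ + ‖pv (pv φ) q‖) / lam q ^ 2 * (‖pv φ q‖ + ‖pu ψ q‖)

lemma one_le_frameBound (φ ψ : ℝ × ℝ → E3) (lam : ℝ × ℝ → ℝ) (q : ℝ × ℝ) :
    1 ≤ frameBound φ ψ lam q := by
  rw [frameBound]
  have : 0 ≤ |pu lam q / lam q| + |pv lam q / lam q|
    + (‖pu (pu φ) q‖ + ‖pu (pv φ) q‖ + ‖pv (pv φ) q‖) / lam q ^ 2 * (‖pv φ q‖ + ‖pu ψ q‖) := by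
    positivity
  linarith

lemma norm_pu_sub_le_norm_frame_sub (φ ψ : ℝ × ℝ → E3) (q : ℝ × ℝ) :
    ‖pu φ q - pu ψ q‖ ≤ ‖frame φ q - frame ψ q‖ :=
  (norm_fst_le _).trans (norm_snd_le (frame φ q - frame ψ q))

lemma norm_pv_sub_le_norm_frame_sub (φ ψ : ℝ × ℝ → E3) (q : ℝ × ℝ) :
    ‖pv φ q - pv ψ q‖ ≤ ‖frame φ q - frame ψ q‖ :=
  (norm_snd_le _).trans (norm_snd_le (frame φ q - frame ψ q))

namespace IsConfImm

variable {U : Set (ℝ × ℝ)} {φ ψ : ℝ × ℝ → E3} {lam : ℝ × ℝ → ℝ} {q : ℝ × ℝ}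

lemma differentiableAt (hφ : IsConfImm U φ lam) (hq : q ∈ U) : DifferentiableAt ℝ φ q :=
  hφ.2.1.differentiableAt_of_isOpen hφ.1 hq

lemma differentiableAt_pu (hφ : IsConfImm U φ lam) (hq : q ∈ U) : DifferentiableAt ℝ (pu φ) q :=
  (hφ.2.1.fderiv_apply_of_isOpen hφ.1 _).differentiableAt_of_isOpen hφ.1 hq

lemma differentiableAt_pv (hφ : IsConfImm U φ lam) (hq : q ∈ U) : DifferentiableAt ℝ (pv φ) q :=
  (hφ.2.1.fderiv_apply_of_isOpen hφ.1 _).differentiableAt_of_isOpen hφ.1 hq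

lemma pu_pv_comm (hφ : IsConfImm U φ lam) (hq : q ∈ U) : pu (pv φ) q = pv (pu φ) q :=
  _root_.pu_pv_comm hφ.2.1 hφ.1 hq

lemma norm_cross (hφ : IsConfImm U φ lam) (hq : q ∈ U) :
    ‖cross (pu φ q) (pv φ q)‖ = lam q ^ 2 := by
  obtain ⟨hlam, huu, hvv, huv⟩ := hφ.2.2.2 q hq
  have hsq : ‖cross (pu φ q) (pv φ q)‖ ^ 2 = (lam q ^ 2) ^ 2 := by
    rw [← ip_self, ip_cross_self, huu, hvv, huv]
    ring
  exact (pow_left_inj₀ (norm_nonneg _) (by positivity) two_ne_zero).1 hsq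

lemma nvec_eq (hφ : IsConfImm U φ lam) (hq : q ∈ U) :
    nvec φ q = (lam q ^ 2)⁻¹ • cross (pu φ q) (pv φ q) := by
  rw [nvec, hφ.norm_cross hq]

lemma norm_nvec (hφ : IsConfImm U φ lam) (hq : q ∈ U) : ‖nvec φ q‖ = 1 := by
  have hlam := (hφ.2.2.2 q hq).1
  rw [nvec, norm_smul, norm_inv, norm_norm, hφ.norm_cross hq]
  exact inv_mul_cancel₀ (by positivity)

lemma eq_decomp (hφ : IsConfImm U φ lam) (hq : q ∈ U) (v : E3) :
    v = (ip v (pu φ q) / lam q ^ 2) • pu φ q + (ip v (pv φ q) / lam q ^ 2) • pv φ q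
      + (ip v (nvec φ q) / lam q ^ 2) • cross (pu φ q) (pv φ q) := by
  obtain ⟨hlam, huu, hvv, huv⟩ := hφ.2.2.2 q hq
  refine (eq_add_add_cross_of_orthogonal (by positivity) huu hvv huv v).trans ?_
  rw [hφ.nvec_eq hq, ip_smul_right]
  match_scalars <;> field_simp

lemma fderiv_lam_sq (hφ : IsConfImm U φ lam) (hq : q ∈ U) (w : ℝ × ℝ) :
    fderiv ℝ (fun x => lam x ^ 2) q w = 2 * (lam q * fderiv ℝ lam q w) := by
  rw [fderiv_fun_pow 2 (hφ.2.2.1.differentiableAt_of_isOpen hφ.1 hq)]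
  simp only [smul_apply, smul_eq_mul, nsmul_eq_mul]
  ring

lemma ip_fderiv_pu_pu (hφ : IsConfImm U φ lam) (hq : q ∈ U) (w : ℝ × ℝ) :
    ip (fderiv ℝ (pu φ) q w) (pu φ q) = lam q * fderiv ℝ lam q w := by
  have h := fderiv_ip_eq_of_eqOn hφ.1 hq (hφ.differentiableAt_pu hq) (hφ.differentiableAt_pu hq)
    (fun x hx => (hφ.2.2.2 x hx).2.1) w
  rw [hφ.fderiv_lam_sq hq, ip_comm (pu φ q)] at h
  linarith

lemma ip_fderiv_pv_pv (hφ : IsConfImm U φ lam) (hq : q ∈ U) (w : ℝ × ℝ) :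
    ip (fderiv ℝ (pv φ) q w) (pv φ q) = lam q * fderiv ℝ lam q w := by
  have h := fderiv_ip_eq_of_eqOn hφ.1 hq (hφ.differentiableAt_pv hq) (hφ.differentiableAt_pv hq)
    (fun x hx => (hφ.2.2.2 x hx).2.2.1) w
  rw [hφ.fderiv_lam_sq hq, ip_comm (pv φ q)] at h
  linarith

lemma ip_fderiv_pu_pv (hφ : IsConfImm U φ lam) (hq : q ∈ U) (w : ℝ × ℝ) :
    ip (pu φ q) (fderiv ℝ (pv φ) q w) + ip (fderiv ℝ (pu φ) q w) (pv φ q) = 0 := by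
  rw [fderiv_ip_eq_of_eqOn hφ.1 hq (hφ.differentiableAt_pu hq) (hφ.differentiableAt_pv hq)
    (fun x hx => (hφ.2.2.2 x hx).2.2.2) w]
  simp

lemma pu_pu_eq (hφ : IsConfImm U φ lam) (hq : q ∈ U) :
    pu (pu φ) q = (pu lam q / lam q) • pu φ q + (-(pv lam q / lam q)) • pv φ q
      + (secondFormUU φ q / lam q ^ 2) • cross (pu φ q) (pv φ q) := by
  have hlam := (hφ.2.2.2 q hq).1
  have huu_u : ip (pu (pu φ) q) (pu φ q) = lam q * pu lam q := hφ.ip_fderiv_pu_pu hq (1, 0)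
  have huv_u : ip (pu (pv φ) q) (pu φ q) = lam q * pv lam q := by
    rw [hφ.pu_pv_comm hq]; exact hφ.ip_fderiv_pu_pu hq (0, 1)
  have huu_v : ip (pu (pu φ) q) (pv φ q) = -(lam q * pv lam q) := by
    have h : ip (pu φ q) (pu (pv φ) q) + ip (pu (pu φ) q) (pv φ q) = 0 :=
      hφ.ip_fderiv_pu_pv hq (1, 0)
    rw [ip_comm, huv_u] at h
    linarith
  refine (hφ.eq_decomp hq _).trans ?_
  rw [huu_u, huu_v, secondFormUU]
  match_scalars <;> field_simp

lemma pu_pv_eq (hφ : IsConfImm U φ lam) (hq : q ∈ U) :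
    pu (pv φ) q = (pv lam q / lam q) • pu φ q + (pu lam q / lam q) • pv φ q
      + (secondFormUV φ q / lam q ^ 2) • cross (pu φ q) (pv φ q) := by
  have hlam := (hφ.2.2.2 q hq).1
  have huv_u : ip (pu (pv φ) q) (pu φ q) = lam q * pv lam q := by
    rw [hφ.pu_pv_comm hq]; exact hφ.ip_fderiv_pu_pu hq (0, 1)
  have huv_v : ip (pu (pv φ) q) (pv φ q) = lam q * pu lam q := hφ.ip_fderiv_pv_pv hq (1, 0)
  refine (hφ.eq_decomp hq _).trans ?_
  rw [huv_u, huv_v, secondFormUV]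
  match_scalars <;> field_simp

lemma pv_pv_eq (hφ : IsConfImm U φ lam) (hq : q ∈ U) :
    pv (pv φ) q = (-(pu lam q / lam q)) • pu φ q + (pv lam q / lam q) • pv φ q
      + (secondFormVV φ q / lam q ^ 2) • cross (pu φ q) (pv φ q) := by
  have hlam := (hφ.2.2.2 q hq).1
  have hvv_v : ip (pv (pv φ) q) (pv φ q) = lam q * pv lam q := hφ.ip_fderiv_pv_pv hq (0, 1)
  have huv_v : ip (pu (pv φ) q) (pv φ q) = lam q * pu lam q := hφ.ip_fderiv_pv_pv hq (1, 0)
  have hvv_u : ip (pv (pv φ) q) (pu φ q) = -(lam q * pu lam q) := by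
    have h : ip (pu φ q) (pv (pv φ) q) + ip (pv (pu φ) q) (pv φ q) = 0 :=
      hφ.ip_fderiv_pu_pv hq (0, 1)
    rw [ip_comm, ← hφ.pu_pv_comm hq, huv_v] at h
    linarith
  refine (hφ.eq_decomp hq _).trans ?_
  rw [hvv_u, hvv_v, secondFormVV]
  match_scalars <;> field_simp

lemma muQ_eq (hφ : IsConfImm U φ lam) (hq : q ∈ U) :
    muQ φ q = (((secondFormUU φ q - secondFormVV φ q) / 4 : ℝ) : ℂ)
      - ((secondFormUV φ q / 2 : ℝ) : ℂ) * I := by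
  have hu := hφ.differentiableAt_pu hq
  have hv := hφ.differentiableAt_pv hq
  rw [muQ, dz, pu, pv, fderiv_phiz hu hv, fderiv_phiz hu hv]
  change cdot ((2 : ℂ)⁻¹ • ((2 : ℂ)⁻¹ • (toC (pu (pu φ) q) - I • toC (pu (pv φ) q))
    - I • ((2 : ℂ)⁻¹ • (toC (pv (pu φ) q) - I • toC (pv (pv φ) q))))) (toC (nvec φ q)) = _
  rw [cdot_toC_eq, ← hφ.pu_pv_comm hq, secondFormUU, secondFormUV, secondFormVV]
  congr 3
  ring

lemma secondForm_eq (hφ : IsConfImm U φ lam) (hψ : IsConfImm U ψ lam) (hq : q ∈ U)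
    (hH : mcurv φ lam q = mcurv ψ lam q) (hmu : muQ φ q = muQ ψ q) :
    secondFormUU φ q = secondFormUU ψ q ∧ secondFormUV φ q = secondFormUV ψ q
      ∧ secondFormVV φ q = secondFormVV ψ q := by
  have hlam := (hφ.2.2.2 q hq).1
  rw [hφ.muQ_eq hq, hψ.muQ_eq hq] at hmu
  have hre : secondFormUU φ q - secondFormVV φ q = secondFormUU ψ q - secondFormVV ψ q := by
    simpa using congrArg re hmu
  have him : secondFormUV φ q = secondFormUV ψ q := by simpa using congrArg im hmu
  rw [mcurv_eq_add, mcurv_eq_add, div_left_inj' (by positivity)] at hH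
  exact ⟨by linarith, him, by linarith⟩

lemma hasFDerivAt_frame (hφ : IsConfImm U φ lam) (hq : q ∈ U) :
    HasFDerivAt (frame φ)
      ((fderiv ℝ φ q).prod ((fderiv ℝ (pu φ) q).prod (fderiv ℝ (pv φ) q))) q :=
  (hφ.differentiableAt hq).hasFDerivAt.prodMk
    ((hφ.differentiableAt_pu hq).hasFDerivAt.prodMk (hφ.differentiableAt_pv hq).hasFDerivAt)

lemma pu_frame (hφ : IsConfImm U φ lam) (hq : q ∈ U) :
    pu (frame φ) q = (pu φ q, pu (pu φ) q, pu (pv φ) q) := by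
  rw [pu, (hφ.hasFDerivAt_frame hq).fderiv]
  rfl

lemma pv_frame (hφ : IsConfImm U φ lam) (hq : q ∈ U) :
    pv (frame φ) q = (pv φ q, pu (pv φ) q, pv (pv φ) q) := by
  rw [pv, (hφ.hasFDerivAt_frame hq).fderiv, hφ.pu_pv_comm hq]
  rfl

lemma continuousOn_frameBound (hφ : IsConfImm U φ lam) (hψ : IsConfImm U ψ lam) :
    ContinuousOn (frameBound φ ψ lam) U := by
  have hlam : ∀ x ∈ U, lam x ≠ 0 := fun x hx => (hφ.2.2.2 x hx).1.ne'
  have hD : ∀ {f : ℝ × ℝ → E3}, ContDiffOn ℝ (⊤ : ℕ∞) f U → ∀ w : ℝ × ℝ,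
      ContinuousOn (fun x => fderiv ℝ f x w) U := fun hf w =>
    (hf.fderiv_apply_of_isOpen hφ.1 w).continuousOn
  have hlamu : ContinuousOn (pu lam) U := (hφ.2.2.1.fderiv_apply_of_isOpen hφ.1 _).continuousOn
  have hlamv : ContinuousOn (pv lam) U := (hφ.2.2.1.fderiv_apply_of_isOpen hφ.1 _).continuousOn
  have hφv : ContinuousOn (pv φ) U := hD hφ.2.1 _
  have hψu : ContinuousOn (pu ψ) U := hD hψ.2.1 _
  have hφuu : ContinuousOn (pu (pu φ)) U := hD (hφ.2.1.fderiv_apply_of_isOpen hφ.1 _) _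
  have hφuv : ContinuousOn (pu (pv φ)) U := hD (hφ.2.1.fderiv_apply_of_isOpen hφ.1 _) _
  have hφvv : ContinuousOn (pv (pv φ)) U := hD (hφ.2.1.fderiv_apply_of_isOpen hφ.1 _) _
  have hl : ContinuousOn lam U := hφ.2.2.1.continuousOn
  have hlam2 : ∀ x ∈ U, lam x ^ 2 ≠ 0 := fun x hx => pow_ne_zero 2 (hlam x hx)
  unfold frameBound
  fun_prop (disch := assumption)

lemma norm_gaussRhs_sub_le (hφ : IsConfImm U φ lam) (hq : q ∈ U) {α β : ℝ}
    (hαβ : |α| + |β| = |pu lam q / lam q| + |pv lam q / lam q|) {x : E3}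
    (hx : ‖x‖ ≤ ‖pu (pu φ) q‖ + ‖pu (pv φ) q‖ + ‖pv (pv φ) q‖) :
    ‖(α • pu φ q + β • pv φ q + (ip x (nvec φ q) / lam q ^ 2) • cross (pu φ q) (pv φ q))
        - (α • pu ψ q + β • pv ψ q + (ip x (nvec φ q) / lam q ^ 2) • cross (pu ψ q) (pv ψ q))‖
      ≤ frameBound φ ψ lam q * ‖frame φ q - frame ψ q‖ := by
  refine (norm_smul_add_smul_add_cross_sub_le (norm_pu_sub_le_norm_frame_sub φ ψ q)
    (norm_pv_sub_le_norm_frame_sub φ ψ q)).trans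
    (mul_le_mul_of_nonneg_right ?_ (norm_nonneg _))
  have hlam := (hφ.2.2.2 q hq).1
  have hγ : |ip x (nvec φ q) / lam q ^ 2|
      ≤ (‖pu (pu φ) q‖ + ‖pu (pv φ) q‖ + ‖pv (pv φ) q‖) / lam q ^ 2 := by
    rw [abs_div, abs_of_pos (by positivity : 0 < lam q ^ 2)]
    gcongr
    calc |ip x (nvec φ q)| ≤ ‖x‖ * ‖nvec φ q‖ := abs_real_inner_le_norm _ _
      _ = ‖x‖ := by rw [hφ.norm_nvec hq, mul_one]
      _ ≤ _ := hx
  rw [frameBound, hαβ]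
  have := mul_le_mul_of_nonneg_right hγ (by positivity : 0 ≤ ‖pv φ q‖ + ‖pu ψ q‖)
  linarith

lemma norm_pu_frame_sub_le (hφ : IsConfImm U φ lam) (hψ : IsConfImm U ψ lam) (hq : q ∈ U)
    (hH : mcurv φ lam q = mcurv ψ lam q) (hmu : muQ φ q = muQ ψ q) :
    ‖pu (frame φ) q - pu (frame ψ) q‖ ≤ frameBound φ ψ lam q * ‖frame φ q - frame ψ q‖ := by
  obtain ⟨hUU, hUV, -⟩ := hφ.secondForm_eq hψ hq hH hmu
  have huu := norm_nonneg (pu (pu φ) q)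
  have huv := norm_nonneg (pu (pv φ) q)
  have hvv := norm_nonneg (pv (pv φ) q)
  rw [hφ.pu_frame hq, hψ.pu_frame hq, Prod.mk_sub_mk, Prod.mk_sub_mk]
  refine norm_prod_le_iff.2 ⟨?_, norm_prod_le_iff.2 ⟨?_, ?_⟩⟩
  · exact (norm_pu_sub_le_norm_frame_sub φ ψ q).trans
      (le_mul_of_one_le_left (norm_nonneg _) (one_le_frameBound φ ψ lam q))
  · rw [hφ.pu_pu_eq hq, hψ.pu_pu_eq hq, ← hUU]
    exact hφ.norm_gaussRhs_sub_le hq (x := pu (pu φ) q) (by rw [abs_neg]) (by linarith)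
  · rw [hφ.pu_pv_eq hq, hψ.pu_pv_eq hq, ← hUV]
    exact hφ.norm_gaussRhs_sub_le hq (x := pu (pv φ) q) (add_comm _ _) (by linarith)

lemma norm_pv_frame_sub_le (hφ : IsConfImm U φ lam) (hψ : IsConfImm U ψ lam) (hq : q ∈ U)
    (hH : mcurv φ lam q = mcurv ψ lam q) (hmu : muQ φ q = muQ ψ q) :
    ‖pv (frame φ) q - pv (frame ψ) q‖ ≤ frameBound φ ψ lam q * ‖frame φ q - frame ψ q‖ := by
  obtain ⟨-, hUV, hVV⟩ := hφ.secondForm_eq hψ hq hH hmu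
  have huu := norm_nonneg (pu (pu φ) q)
  have huv := norm_nonneg (pu (pv φ) q)
  have hvv := norm_nonneg (pv (pv φ) q)
  rw [hφ.pv_frame hq, hψ.pv_frame hq, Prod.mk_sub_mk, Prod.mk_sub_mk]
  refine norm_prod_le_iff.2 ⟨?_, norm_prod_le_iff.2 ⟨?_, ?_⟩⟩
  · exact (norm_pv_sub_le_norm_frame_sub φ ψ q).trans
      (le_mul_of_one_le_left (norm_nonneg _) (one_le_frameBound φ ψ lam q))
  · rw [hφ.pu_pv_eq hq, hψ.pu_pv_eq hq, ← hUV]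
    exact hφ.norm_gaussRhs_sub_le hq (x := pu (pv φ) q) (add_comm _ _) (by linarith)
  · rw [hφ.pv_pv_eq hq, hψ.pv_pv_eq hq, ← hVV]
    exact hφ.norm_gaussRhs_sub_le hq (x := pv (pv φ) q) (by rw [abs_neg]) (by linarith)

lemma norm_fderiv_frame_sub_le (hφ : IsConfImm U φ lam) (hψ : IsConfImm U ψ lam) (hq : q ∈ U)
    (hH : mcurv φ lam q = mcurv ψ lam q) (hmu : muQ φ q = muQ ψ q) :
    ‖fderiv ℝ (fun x => frame φ x - frame ψ x) q‖
      ≤ 2 * frameBound φ ψ lam q * ‖frame φ q - frame ψ q‖ := by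
  have hsub : fderiv ℝ (fun x => frame φ x - frame ψ x) q
      = fderiv ℝ (frame φ) q - fderiv ℝ (frame ψ) q :=
    fderiv_fun_sub (hφ.hasFDerivAt_frame hq).differentiableAt
      (hψ.hasFDerivAt_frame hq).differentiableAt
  refine norm_fderiv_le_norm_pu_add_norm_pv.trans ?_
  change ‖fderiv ℝ _ q (1, 0)‖ + ‖fderiv ℝ _ q (0, 1)‖ ≤ _
  rw [hsub]
  change ‖pu (frame φ) q - pu (frame ψ) q‖ + ‖pv (frame φ) q - pv (frame ψ) q‖ ≤ _
  linarith [hφ.norm_pu_frame_sub_le hψ hq hH hmu, hφ.norm_pv_frame_sub_le hψ hq hH hmu]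

end IsConfImm

/-- uniqueness in the λ-H representation, pointwise-anchored form:
two conformal immersions on a nonempty connected open set with the same conformal
factor, the same mean curvature and the same μ, agreeing together with their first
derivatives at one point, coincide on U. -/
theorem lambdaH_representation_uniqueness_anchored
    (U : Set (ℝ × ℝ)) (hU : IsConnected U)
    (φ ψ : ℝ × ℝ → E3) (lam : ℝ × ℝ → ℝ)
    (hφ : IsConfImm U φ lam) (hψ : IsConfImm U ψ lam)
    (hH : ∀ p ∈ U, mcurv φ lam p = mcurv ψ lam p)
    (hmu : ∀ p ∈ U, muQ φ p = muQ ψ p)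
    (p : ℝ × ℝ) (hp : p ∈ U)
    (h0 : φ p = ψ p) (h1 : pu φ p = pu ψ p) (h2 : pv φ p = pv ψ p) :
    ∀ q ∈ U, φ q = ψ q := by
  have hframe : ∀ q ∈ U, frame φ q - frame ψ q = 0 :=
    hU.isPreconnected.eq_zero_of_norm_fderiv_le_mul_norm hφ.1
      (fun x hx => (hφ.hasFDerivAt_frame hx).differentiableAt.sub
        (hψ.hasFDerivAt_frame hx).differentiableAt)
      (continuousOn_const.mul (hφ.continuousOn_frameBound hψ))
      (fun x hx => hφ.norm_fderiv_frame_sub_le hψ hx (hH x hx) (hmu x hx))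
      hp (by simp [frame, h0, h1, h2])
  intro q hq
  exact congrArg Prod.fst (sub_eq_zero.1 (hframe q hq))
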